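/- arXiv:1209.2078 — 4 statements merged into one kernel-verified Lean document; each statement's English description precedes it below -/
import Mathlib

section
/- Let z be a nonreal complex number with |z| = 1 and let k be a positive natural number. The number of k-th roots of z lying in the open upper half-plane equals k/2 if k is even, (k+1)/2 if k is odd and Im z > 0, and (k-1)/2 if k is odd and Im z < 0. -/
/-!
Write `z = exp (iθ)` with `θ = arg z ∈ (-π, π) \ {0}`. A `k`-th root `w` of `z` in the upper
half-plane has `arg w ∈ (0, π)` and `k · arg w = θ + 2πn` for some integer `n`; conversely
`exp (i (θ + 2πn) / k)` is such a root whenever `0 < θ + 2πn < kπ`, and distinct `n` give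
distinct roots since the arguments lie in `(0, π)`. So the roots are counted by the integers
`n` with `0 < θ + 2πn < kπ`, i.e. `0 ≤ 2n < k` when `θ > 0` and `0 ≤ 2n - 1 < k` when `θ < 0`:
the even, respectively odd, numbers below `k`.
-/

open Real

namespace Complex

theorem arg_mem_Ioo_of_im_pos {z : ℂ} (hz : 0 < z.im) : arg z ∈ Set.Ioo 0 π :=
  ⟨(arg_nonneg_iff.2 hz.le).lt_of_ne fun h => hz.ne' (arg_eq_zero_iff.1 h.symm).2,
    (arg_le_pi z).lt_of_ne fun h => hz.ne' (arg_eq_pi_iff.1 h).2⟩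

theorem arg_exp_ofReal_mul_I {x : ℝ} (hx : x ∈ Set.Ioc (-π) π) : arg (exp (x * I)) = x := by
  rw [exp_mul_I, arg_cos_add_sin_mul_I hx]

theorem exp_arg_mul_I_of_norm_eq_one {w : ℂ} (hw : ‖w‖ = 1) : exp (arg w * I) = w := by
  simpa [hw] using norm_mul_exp_arg_mul_I w

def upperRootIndices (θ : ℝ) (k : ℕ) : Set ℤ :=
  {n | 0 < θ + 2 * π * n ∧ θ + 2 * π * n < k * π}

theorem div_mem_Ioo_of_mem_upperRootIndices {θ : ℝ} {k : ℕ} {n : ℤ}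
    (hn : n ∈ upperRootIndices θ k) : (θ + 2 * π * n) / k ∈ Set.Ioo 0 π := by
  have hkR : (0 : ℝ) < k := pos_of_mul_pos_left (hn.1.trans hn.2) pi_pos.le
  exact ⟨div_pos hn.1 hkR, (div_lt_iff₀ hkR).2 (by linarith [hn.2])⟩

theorem exists_mem_upperRootIndices_of_pow_eq {θ : ℝ} {k : ℕ} (hk : k ≠ 0) {w : ℂ}
    (hwk : w ^ k = exp (θ * I)) (hwim : 0 < w.im) :
    ∃ n ∈ upperRootIndices θ k, exp (((θ + 2 * π * n) / k : ℝ) * I) = w := by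
  have hkR : (0 : ℝ) < k := by positivity
  have hw1 : ‖w‖ = 1 := by
    rw [← pow_eq_one_iff_of_nonneg (norm_nonneg w) hk, ← norm_pow, hwk, norm_exp_ofReal_mul_I]
  obtain ⟨n, hn⟩ : ∃ n : ℤ, (k * arg w : ℂ) * I = θ * I + n * (2 * π * I) := by
    rw [← exp_eq_exp_iff_exists_int, mul_assoc, exp_nat_mul, exp_arg_mul_I_of_norm_eq_one hw1,
      hwk]
  have hkarg : k * arg w = θ + 2 * π * n := by
    simpa [mul_comm, mul_left_comm] using congrArg im hn
  have harg := arg_mem_Ioo_of_im_pos hwim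
  refine ⟨n, ⟨?_, ?_⟩, ?_⟩
  · rw [← hkarg]; exact mul_pos hkR harg.1
  · rw [← hkarg]; exact mul_lt_mul_of_pos_left harg.2 hkR
  · rw [← hkarg, mul_div_cancel_left₀ _ hkR.ne', exp_arg_mul_I_of_norm_eq_one hw1]

theorem ncard_pow_eq_exp_mul_I_im_pos (θ : ℝ) {k : ℕ} (hk : k ≠ 0) :
    {w : ℂ | w ^ k = exp (θ * I) ∧ 0 < w.im}.ncard = (upperRootIndices θ k).ncard := by
  set root : ℤ → ℂ := fun n => exp (((θ + 2 * π * n) / k : ℝ) * I)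
  have himage : {w : ℂ | w ^ k = exp (θ * I) ∧ 0 < w.im} = root '' upperRootIndices θ k := by
    ext w
    constructor
    · rintro ⟨hwk, hwim⟩
      exact exists_mem_upperRootIndices_of_pow_eq hk hwk hwim
    · rintro ⟨n, hn, rfl⟩
      have hangle := div_mem_Ioo_of_mem_upperRootIndices hn
      refine ⟨?_, ?_⟩
      · rw [← exp_nat_mul, exp_eq_exp_iff_exists_int]
        exact ⟨n, by push_cast; field_simp⟩
      · rw [exp_ofReal_mul_I_im]
        exact sin_pos_of_pos_of_lt_pi hangle.1 hangle.2
  have hinj : Set.InjOn root (upperRootIndices θ k) := by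
    have hIoc : ∀ n ∈ upperRootIndices θ k, (θ + 2 * π * n) / k ∈ Set.Ioc (-π) π := fun n hn =>
      Set.Ioo_subset_Ioc_self.trans (Set.Ioc_subset_Ioc_left (by linarith [pi_pos]))
        (div_mem_Ioo_of_mem_upperRootIndices hn)
    intro m hm n hn h
    have harg := congrArg arg h
    simp only [root, arg_exp_ofReal_mul_I (hIoc m hm), arg_exp_ofReal_mul_I (hIoc n hn),
      div_left_inj' (Nat.cast_ne_zero (R := ℝ) |>.2 hk), add_right_inj,
      mul_right_inj' two_pi_pos.ne'] at harg
    exact_mod_cast harg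
  rw [himage, hinj.ncard_image]

theorem int_mul_pi_lt_add_int_mul_pi_iff {φ : ℝ} (hφ : φ ∈ Set.Ioo 0 π) (a m : ℤ) :
    a * π < φ + m * π ↔ a ≤ m := by
  constructor
  · intro h
    by_contra! hma
    have : (m : ℝ) + 1 ≤ a := by exact_mod_cast hma
    nlinarith [hφ.2, pi_pos]
  · intro h
    have : (a : ℝ) ≤ m := by exact_mod_cast h
    nlinarith [hφ.1, pi_pos]

theorem add_int_mul_pi_lt_int_mul_pi_iff {φ : ℝ} (hφ : φ ∈ Set.Ioo 0 π) (a m : ℤ) :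
    φ + m * π < a * π ↔ m < a := by
  constructor
  · intro h
    by_contra! ham
    have : (a : ℝ) ≤ m := by exact_mod_cast ham
    nlinarith [hφ.1, pi_pos]
  · intro h
    have : (m : ℝ) + 1 ≤ a := by exact_mod_cast h
    nlinarith [hφ.2, pi_pos]

theorem upperRootIndices_add_int_mul_pi {φ : ℝ} (hφ : φ ∈ Set.Ioo 0 π) (c : ℤ) (k : ℕ) :
    upperRootIndices (φ + c * π) k = {n | 0 ≤ 2 * n + c ∧ 2 * n + c < k} := by
  ext n
  have hshift : φ + c * π + 2 * π * n = φ + ((2 * n + c : ℤ) : ℝ) * π := by push_cast; ring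
  have h0 := int_mul_pi_lt_add_int_mul_pi_iff hφ 0 (2 * n + c)
  have hk := add_int_mul_pi_lt_int_mul_pi_iff hφ k (2 * n + c)
  rw [Int.cast_zero, zero_mul] at h0
  rw [Int.cast_natCast] at hk
  simp only [upperRootIndices, Set.mem_ofPred_eq, hshift, h0, hk]

theorem ncard_upperRootIndices_of_pos {θ : ℝ} (hθ : θ ∈ Set.Ioo 0 π) (k : ℕ) :
    (upperRootIndices θ k).ncard = (k + 1) / 2 := by
  have hset := upperRootIndices_add_int_mul_pi hθ 0 k
  have hIco : {n : ℤ | 0 ≤ 2 * n + 0 ∧ 2 * n + 0 < k} = Finset.Ico 0 (((k : ℤ) + 1) / 2) := by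
    ext n; simp only [Set.mem_ofPred_eq, Finset.coe_Ico, Set.mem_Ico]; omega
  rw [Int.cast_zero, zero_mul, add_zero] at hset
  rw [hset, hIco, Set.ncard_coe_finset, Int.card_Ico]
  omega

theorem ncard_upperRootIndices_of_neg {θ : ℝ} (hθ : θ ∈ Set.Ioo (-π) 0) (k : ℕ) :
    (upperRootIndices θ k).ncard = k / 2 := by
  have hset := upperRootIndices_add_int_mul_pi (φ := θ + π)
    ⟨by linarith [hθ.1], by linarith [hθ.2]⟩ (-1) k
  have hIcc : {n : ℤ | 0 ≤ 2 * n + -1 ∧ 2 * n + -1 < k} = Finset.Icc 1 ((k : ℤ) / 2) := by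
    ext n; simp only [Set.mem_ofPred_eq, Finset.coe_Icc, Set.mem_Icc]; omega
  rw [Int.cast_neg, Int.cast_one, neg_one_mul, add_neg_cancel_right] at hset
  rw [hset, hIcc, Set.ncard_coe_finset, Int.card_Icc]
  omega

end Complex

open Complex in
/-- The number of `k`-th roots of a nonreal unimodular complex number `z` in the
open upper half-plane: `k/2` if `k` is even, `(k+1)/2` if `k` is odd and `Im z > 0`,
and `(k-1)/2` if `k` is odd and `Im z < 0`. -/
theorem stmt_1 (z : ℂ) (hz : z.im ≠ 0) (hz1 : ‖z‖ = 1) (k : ℕ) (hk : 0 < k) :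
    Set.ncard {w : ℂ | w ^ k = z ∧ 0 < w.im} =
      if k % 2 = 0 then k / 2
      else if 0 < z.im then (k + 1) / 2 else (k - 1) / 2 := by
  have hcount := ncard_pow_eq_exp_mul_I_im_pos (arg z) hk.ne'
  rw [exp_arg_mul_I_of_norm_eq_one hz1] at hcount
  rw [hcount]
  rcases hz.lt_or_gt with hneg | hpos
  · rw [ncard_upperRootIndices_of_neg ⟨neg_pi_lt_arg z, arg_neg_iff.2 hneg⟩, if_neg hneg.not_gt]
    split_ifs <;> omega
  · rw [ncard_upperRootIndices_of_pos (arg_mem_Ioo_of_im_pos hpos), if_pos hpos]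
    split_ifs <;> omega
end

section
/- Let μ₀, ..., μ_N be distributions on the two-dimensional torus whose Fourier coefficients vanish whenever one of the two frequency indices is zero, and let k, l be positive integers. Then there exist distributions φ₁, ..., φ_N with the same vanishing property, satisfying −∂₁^k φ₁ = μ₀, ∂₂^l φ_j − ∂₁^k φ_{j+1} = μ_j for j = 1, ..., N−1, and ∂₂^l φ_N = μ_N, if and only if ∑_{j=0}^N ∂₁^{jk} ∂₂^{(N−j)l} μ_j = 0. Moreover, when this condition holds the solution is unique. -/
open Real

/-- A distribution on `𝕋²`, represented by its array of Fourier coefficients,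
is *proper* if its Fourier coefficients vanish whenever one of the two frequency
indices is zero. -/
def IsProperCoeff (c : ℤ → ℤ → ℂ) : Prop := ∀ m n : ℤ, m = 0 ∨ n = 0 → c m n = 0

/-!
Fix a frequency `(m, n)` and write `a = (2πim)^k`, `b = (2πin)^l`. The system becomes the
two-term recurrence `b x_j - a x_{j+1} = y_j` with boundary values `x_0 = x_{N+1} = 0`.
Multiplying the `j`-th equation by `a^j b^(N-j)` and summing telescopes to
`∑ a^j b^(N-j) y_j = b^(N+1) x_0 - a^(N+1) x_{N+1}`, which gives necessity. When `m, n ≠ 0`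
we have `a ≠ 0`, so the recurrence started at `x_0 = 0` has exactly one solution, and the same
identity shows that it vanishes at `N + 1` precisely when the sum vanishes. At frequencies with
`m = 0` or `n = 0` properness forces everything to be zero.
-/

open Finset

theorem sum_pow_mul_pow_mul_eq_of_recurrence {R : Type*} [CommRing R] {a b : R} {x y : ℕ → R}
    {N : ℕ} (h : ∀ j ≤ N, b * x j - a * x (j + 1) = y j) :
    ∑ j ∈ range (N + 1), a ^ j * b ^ (N - j) * y j
      = b ^ (N + 1) * x 0 - a ^ (N + 1) * x (N + 1) := by
  have hterm : ∀ j ∈ range (N + 1), a ^ j * b ^ (N - j) * y j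
      = a ^ j * b ^ (N + 1 - j) * x j - a ^ (j + 1) * b ^ (N + 1 - (j + 1)) * x (j + 1) := by
    intro j hj
    have hjN : j ≤ N := Nat.lt_succ_iff.mp (mem_range.mp hj)
    rw [← h j hjN, Nat.succ_sub_succ, Nat.sub_add_comm hjN]
    ring
  rw [sum_congr rfl hterm, sum_range_sub']
  simp

section Recurrence

variable {K : Type*} [Field K]

def chainSolution (a b : K) (y : ℕ → K) : ℕ → K
  | 0 => 0
  | j + 1 => (b * chainSolution a b y j - y j) / a

variable {a b : K} {y : ℕ → K}

theorem chainSolution_recurrence (ha : a ≠ 0) (j : ℕ) :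
    b * chainSolution a b y j - a * chainSolution a b y (j + 1) = y j := by
  rw [chainSolution, mul_div_cancel₀ _ ha, sub_sub_cancel]

theorem eq_chainSolution_of_recurrence {x : ℕ → K} {M : ℕ} (ha : a ≠ 0) (h0 : x 0 = 0)
    (h : ∀ j < M, b * x j - a * x (j + 1) = y j) : ∀ j ≤ M, x j = chainSolution a b y j
  | 0, _ => h0
  | j + 1, hj => by
    rw [chainSolution, ← eq_chainSolution_of_recurrence ha h0 h j (by omega),
      ← h j (by omega), sub_sub_cancel, mul_div_cancel_left₀ _ ha]

theorem chainSolution_succ_eq_zero_iff (ha : a ≠ 0) (N : ℕ) :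
    chainSolution a b y (N + 1) = 0 ↔ ∑ j ∈ range (N + 1), a ^ j * b ^ (N - j) * y j = 0 := by
  rw [sum_pow_mul_pow_mul_eq_of_recurrence fun j _ => chainSolution_recurrence ha j]
  simp [chainSolution, ha]

end Recurrence

section ProperSystem

variable {A B : ℤ → ℂ} {N : ℕ} {μ : ℕ → ℤ → ℤ → ℂ}

def IsProperChainSolution (A B : ℤ → ℂ) (N : ℕ) (μ φ : ℕ → ℤ → ℤ → ℂ) : Prop :=
  (∀ j, IsProperCoeff (φ j)) ∧ φ 0 = 0 ∧ (∀ j, N < j → φ j = 0) ∧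
    ∀ j ≤ N, ∀ m n : ℤ, B n * φ j m n - A m * φ (j + 1) m n = μ j m n

noncomputable def properChainSolution (A B : ℤ → ℂ) (N : ℕ) (μ : ℕ → ℤ → ℤ → ℂ) :
    ℕ → ℤ → ℤ → ℂ :=
  fun j m n => if m = 0 ∨ n = 0 ∨ N < j then 0 else chainSolution (A m) (B n) (μ · m n) j

theorem properChainSolution_apply_of_eq_zero_or {j : ℕ} {m n : ℤ} (hmn : m = 0 ∨ n = 0) :
    properChainSolution A B N μ j m n = 0 :=
  if_pos (or_assoc.mp (Or.inl hmn))

theorem properChainSolution_eq_chainSolution {j : ℕ} {m n : ℤ} (hA : A m ≠ 0) (hm : m ≠ 0)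
    (hn : n ≠ 0) (hsum : ∑ j ∈ range (N + 1), A m ^ j * B n ^ (N - j) * μ j m n = 0)
    (hj : j ≤ N + 1) :
    properChainSolution A B N μ j m n = chainSolution (A m) (B n) (μ · m n) j := by
  rcases hj.lt_or_eq with hj | rfl
  · simp [properChainSolution, hm, hn, Nat.lt_succ_iff.mp hj]
  · simp [properChainSolution, (chainSolution_succ_eq_zero_iff hA N).mpr hsum]

theorem isProperChainSolution_properChainSolution (hA : ∀ m, m ≠ 0 → A m ≠ 0)
    (hμ : ∀ j, IsProperCoeff (μ j))
    (hsum : ∀ m n, ∑ j ∈ range (N + 1), A m ^ j * B n ^ (N - j) * μ j m n = 0) :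
    IsProperChainSolution A B N μ (properChainSolution A B N μ) := by
  refine ⟨fun j m n => properChainSolution_apply_of_eq_zero_or, ?_, fun j hj => ?_, ?_⟩
  · funext m n; simp [properChainSolution, chainSolution]
  · funext m n; simp [properChainSolution, hj]
  · intro j hj m n
    by_cases hmn : m = 0 ∨ n = 0
    · simp [properChainSolution_apply_of_eq_zero_or hmn, hμ j m n hmn]
    obtain ⟨hm, hn⟩ := not_or.mp hmn
    rw [properChainSolution_eq_chainSolution (hA m hm) hm hn (hsum m n) (by omega),
      properChainSolution_eq_chainSolution (hA m hm) hm hn (hsum m n) (by omega),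
      chainSolution_recurrence (hA m hm)]

theorem IsProperChainSolution.eq_properChainSolution {φ : ℕ → ℤ → ℤ → ℂ}
    (hA : ∀ m, m ≠ 0 → A m ≠ 0) (hφ : IsProperChainSolution A B N μ φ) :
    φ = properChainSolution A B N μ := by
  obtain ⟨hprop, h0, hgt, heq⟩ := hφ
  funext j m n
  by_cases hmn : m = 0 ∨ n = 0
  · rw [properChainSolution_apply_of_eq_zero_or hmn, hprop j m n hmn]
  by_cases hj : N < j
  · simp [properChainSolution, hj, hgt j hj]
  obtain ⟨hm, hn⟩ := not_or.mp hmn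
  simp only [properChainSolution, hm, hn, hj, or_self, if_false]
  exact eq_chainSolution_of_recurrence (x := (φ · m n)) (hA m hm) (by simp [h0])
    (fun i hi => heq i hi.le m n) j (not_lt.mp hj)

theorem existsUnique_isProperChainSolution_iff (hA : ∀ m, m ≠ 0 → A m ≠ 0)
    (hμ : ∀ j, IsProperCoeff (μ j)) :
    (∃! φ, IsProperChainSolution A B N μ φ) ↔
      ∀ m n, ∑ j ∈ range (N + 1), A m ^ j * B n ^ (N - j) * μ j m n = 0 := by
  refine ⟨fun ⟨φ, ⟨_, h0, hgt, heq⟩, _⟩ m n => ?_, fun hsum => ?_⟩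
  · rw [sum_pow_mul_pow_mul_eq_of_recurrence (x := (φ · m n)) (heq · · m n)]
    simp [h0, hgt (N + 1) N.lt_succ_self]
  · exact ⟨_, isProperChainSolution_properChainSolution hA hμ hsum,
      fun _ hφ => hφ.eq_properChainSolution hA⟩

end ProperSystem

theorem stmt_8_general (N : ℕ) (k l : ℕ)
    (μ : ℕ → ℤ → ℤ → ℂ) (hμ : ∀ j, IsProperCoeff (μ j)) :
    (∃! φ : ℕ → ℤ → ℤ → ℂ,
        (∀ j, IsProperCoeff (φ j)) ∧ φ 0 = 0 ∧ (∀ j, N < j → φ j = 0) ∧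
        ∀ j : ℕ, j ≤ N → ∀ m n : ℤ,
          (2 * π * Complex.I * n) ^ l * φ j m n
            - (2 * π * Complex.I * m) ^ k * φ (j + 1) m n = μ j m n)
      ↔
    (∀ m n : ℤ, ∑ j ∈ Finset.range (N + 1),
        (2 * π * Complex.I * m) ^ (j * k) * (2 * π * Complex.I * n) ^ ((N - j) * l)
          * μ j m n = 0) := by
  simp only [pow_mul']
  exact existsUnique_isProperChainSolution_iff
    (fun m hm => pow_ne_zero k (mul_ne_zero Complex.two_pi_I_ne_zero (Int.cast_ne_zero.mpr hm))) hμ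

/-- Solvability criterion (on the level of Fourier coefficients) for the system
`−∂₁^k φ₁ = μ₀`, `∂₂^l φ_j − ∂₁^k φ_{j+1} = μ_j` (`j = 1,…,N−1`), `∂₂^l φ_N = μ_N`
in proper distributions, together with uniqueness.  The solution is encoded as a
function `φ : ℕ → ℤ → ℤ → ℂ` with the conventions `φ 0 = 0` and `φ j = 0` for
`j > N`, so that the system reads `∂₂^l φ_j − ∂₁^k φ_{j+1} = μ_j` for `0 ≤ j ≤ N`. -/
theorem stmt_8 (N : ℕ) (hN : 0 < N) (k l : ℕ) (hk : 0 < k) (hl : 0 < l)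
    (μ : ℕ → ℤ → ℤ → ℂ) (hμ : ∀ j, IsProperCoeff (μ j)) :
    (∃! φ : ℕ → ℤ → ℤ → ℂ,
        (∀ j, IsProperCoeff (φ j)) ∧ φ 0 = 0 ∧ (∀ j, N < j → φ j = 0) ∧
        ∀ j : ℕ, j ≤ N → ∀ m n : ℤ,
          (2 * π * Complex.I * n) ^ l * φ j m n
            - (2 * π * Complex.I * m) ^ k * φ (j + 1) m n = μ j m n)
      ↔
    (∀ m n : ℤ, ∑ j ∈ Finset.range (N + 1),
        (2 * π * Complex.I * m) ^ (j * k) * (2 * π * Complex.I * n) ^ ((N - j) * l)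
          * μ j m n = 0) :=
  stmt_8_general N k l μ hμ
end

section
/- Let u and v be proper distributions on the two-dimensional torus and k, l positive integers such that ∂₂^l u + ∂₁^k v = 0. Then there exists a unique proper distribution w with u = −∂₁^k w and v = ∂₂^l w. -/
/-
With `α(m) = (2πim)^k` and `β(n) = (2πin)^l`, the solution is `ŵ(m,n) = -û(m,n) / α(m)`:
`α(m) ≠ 0` for `m ≠ 0`, dividing by `α(0)` is harmless since `û(0,n) = 0`, and the relation
`β(n) û + α(m) v̂ = 0` then gives `v̂ = β(n) ŵ`. Uniqueness is cancellation of `α(m)` off the line `m = 0`.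
-/

open Real

namespace IsProperCoeff

variable {α : ℤ → ℂ} {u v w : ℤ → ℤ → ℂ}

lemma neg_div (hu : IsProperCoeff u) (α : ℤ → ℂ) : IsProperCoeff fun m n ↦ -(u m n / α m) :=
  fun m n hmn ↦ by simp [hu m n hmn]

lemma ext_of_mul_eq (hα : ∀ m, m ≠ 0 → α m ≠ 0) (hv : IsProperCoeff v) (hw : IsProperCoeff w)
    (h : ∀ m n, α m * v m n = α m * w m n) : v = w := by
  funext m n
  by_cases hm : m = 0
  · rw [hv m n (.inl hm), hw m n (.inl hm)]
  · exact mul_left_cancel₀ (hα m hm) (h m n)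

theorem existsUnique_of_mul_add_mul_eq_zero {β : ℤ → ℂ} (hα : ∀ m, m ≠ 0 → α m ≠ 0)
    (hu : IsProperCoeff u) (hv : IsProperCoeff v) (h : ∀ m n, β n * u m n + α m * v m n = 0) :
    ∃! w, IsProperCoeff w ∧ ∀ m n, u m n = -(α m * w m n) ∧ v m n = β n * w m n := by
  have hu_eq : ∀ m n, u m n = -(α m * -(u m n / α m)) := fun m n ↦ by
    by_cases hm : m = 0
    · simp [hu m n (.inl hm)]
    · rw [mul_neg, neg_neg, mul_div_cancel₀ _ (hα m hm)]
  refine ⟨fun m n ↦ -(u m n / α m), ⟨hu.neg_div α, fun m n ↦ ⟨hu_eq m n, ?_⟩⟩, ?_⟩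
  · by_cases hmn : m = 0 ∨ n = 0
    · simp [hu m n hmn, hv m n hmn]
    · have hm : α m ≠ 0 := hα m (not_or.mp hmn).1
      field_simp
      linear_combination h m n
  · rintro w' ⟨hw', hw'_eq⟩
    refine ext_of_mul_eq hα hw' (hu.neg_div α) fun m n ↦ neg_injective ?_
    rw [← (hw'_eq m n).1, ← hu_eq m n]

end IsProperCoeff

lemma two_pi_I_mul_intCast_pow_ne_zero (k : ℕ) {m : ℤ} (hm : m ≠ 0) :
    (2 * π * Complex.I * m) ^ k ≠ 0 := by
  have : (m : ℂ) ≠ 0 := Int.cast_ne_zero.mpr hm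
  simp [Real.pi_ne_zero, this]

theorem stmt_9_general (k l : ℕ) (u v : ℤ → ℤ → ℂ)
    (hu : IsProperCoeff u) (hv : IsProperCoeff v)
    (h : ∀ m n : ℤ,
      (2 * π * Complex.I * n) ^ l * u m n + (2 * π * Complex.I * m) ^ k * v m n = 0) :
    ∃! w : ℤ → ℤ → ℂ, IsProperCoeff w ∧
      ∀ m n : ℤ,
        u m n = -((2 * π * Complex.I * m) ^ k * w m n) ∧
        v m n = (2 * π * Complex.I * n) ^ l * w m n :=
  hu.existsUnique_of_mul_add_mul_eq_zero (fun _ ↦ two_pi_I_mul_intCast_pow_ne_zero k) hv h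

/-- If proper distributions `u, v` on `𝕋²` (represented by Fourier coefficients)
satisfy `∂₂^l u + ∂₁^k v = 0`, then there is a unique proper `w` with
`u = −∂₁^k w` and `v = ∂₂^l w`. -/
theorem stmt_9 (k l : ℕ) (hk : 0 < k) (hl : 0 < l) (u v : ℤ → ℤ → ℂ)
    (hu : IsProperCoeff u) (hv : IsProperCoeff v)
    (h : ∀ m n : ℤ,
      (2 * π * Complex.I * n) ^ l * u m n + (2 * π * Complex.I * m) ^ k * v m n = 0) :
    ∃! w : ℤ → ℤ → ℂ, IsProperCoeff w ∧
      ∀ m n : ℤ,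
        u m n = -((2 * π * Complex.I * m) ^ k * w m n) ∧
        v m n = (2 * π * Complex.I * n) ^ l * w m n :=
  stmt_9_general k l u v hu hv h
end

section
/- Let k, l be positive integers and τ a nonzero complex number such that i^{l−k} τ is purely imaginary. Then the function (m, n) ↦ ((2πim)^k − τ(2πin)^l)^{−1} is well defined and bounded on ℤ² \ {(0,0)}. -/
/-!
The hypothesis says that `(2πim)^k ∈ iᵏℝ` and `τ(2πin)^l ∈ iᵏ(i^{l-k}τ)ℝ ⊆ i^{k+1}ℝ` are
orthogonal in `ℂ ≅ ℝ²`. By Pythagoras the norm of their difference dominates the norm of each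
term, and these are at least `1` when `m ≠ 0`, resp. at least `‖τ‖` when `n ≠ 0`. Hence the
difference has norm at least `min 1 ‖τ‖ > 0`.
-/

open Real Complex ComplexConjugate

theorem Complex.conj_I_pow_mul_I_pow (k l : ℕ) : conj I ^ k * I ^ l = I ^ ((l : ℤ) - k) := by
  rw [conj_I, ← inv_I, inv_pow, zpow_sub₀ I_ne_zero, zpow_natCast, zpow_natCast, mul_comm,
    div_eq_mul_inv]

theorem norm_le_norm_sub_of_real_inner_eq_zero {F : Type*} [NormedAddCommGroup F]
    [InnerProductSpace ℝ F] {x y : F} (h : inner ℝ x y = 0) :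
    ‖x‖ ≤ ‖x - y‖ ∧ ‖y‖ ≤ ‖x - y‖ := by
  have hsq := norm_sub_sq_eq_norm_sq_add_norm_sq_real h
  constructor <;> rw [mul_self_le_mul_self_iff (norm_nonneg _) (norm_nonneg _), hsq] <;>
    linarith [mul_self_nonneg ‖x‖, mul_self_nonneg ‖y‖]

theorem one_le_norm_two_pi_I_mul_int_pow {m : ℤ} (hm : m ≠ 0) (k : ℕ) :
    1 ≤ ‖(2 * π * I * m) ^ k‖ := by
  have hm_abs : (1 : ℝ) ≤ |(m : ℝ)| := by exact_mod_cast Int.one_le_abs hm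
  have hπ : (1 : ℝ) ≤ 2 * π := by linarith [pi_gt_three]
  rw [norm_pow]
  refine one_le_pow₀ ?_
  simp only [norm_mul, norm_real, norm_I, norm_intCast, Real.norm_eq_abs, Complex.norm_two,
    abs_of_pos pi_pos, mul_one]
  nlinarith

section

variable {τ : ℂ} {k l : ℕ}

theorem real_inner_two_pi_I_pow_eq_zero (h : (I ^ ((l : ℤ) - k) * τ).re = 0) (m n : ℤ) :
    inner ℝ ((2 * π * I * m) ^ k) (τ * (2 * π * I * n) ^ l) = 0 := by
  have hprod : τ * (2 * π * I * n) ^ l * conj ((2 * π * I * m) ^ k)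
      = ((2 * π * m) ^ k * (2 * π * n) ^ l : ℝ) * (conj I ^ k * I ^ l * τ) := by
    simp only [map_pow, map_mul, conj_ofReal, map_intCast, map_ofNat]
    push_cast
    ring
  rw [Complex.inner, hprod, conj_I_pow_mul_I_pow, re_ofReal_mul, h, mul_zero]

theorem min_one_norm_le_norm_two_pi_I_pow_sub (h : (I ^ ((l : ℤ) - k) * τ).re = 0) {m n : ℤ}
    (hmn : ¬(m = 0 ∧ n = 0)) :
    min 1 ‖τ‖ ≤ ‖(2 * π * I * m) ^ k - τ * (2 * π * I * n) ^ l‖ := by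
  obtain ⟨hm_le, hn_le⟩ :=
    norm_le_norm_sub_of_real_inner_eq_zero (real_inner_two_pi_I_pow_eq_zero h m n)
  by_cases hm : m = 0
  · have hn : n ≠ 0 := fun hn => hmn ⟨hm, hn⟩
    calc min 1 ‖τ‖ ≤ ‖τ‖ := min_le_right _ _
      _ ≤ ‖τ‖ * ‖(2 * π * I * n) ^ l‖ :=
        le_mul_of_one_le_right (norm_nonneg _) (one_le_norm_two_pi_I_mul_int_pow hn l)
      _ = ‖τ * (2 * π * I * n) ^ l‖ := (norm_mul _ _).symm
      _ ≤ _ := hn_le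
  · exact (min_le_left _ _).trans ((one_le_norm_two_pi_I_mul_int_pow hm k).trans hm_le)

end

theorem stmt_11_general (k l : ℕ) (τ : ℂ) (hτ : τ ≠ 0)
    (h : (Complex.I ^ ((l : ℤ) - (k : ℤ)) * τ).re = 0) :
    ∃ C : ℝ, ∀ m n : ℤ, ¬(m = 0 ∧ n = 0) →
      (2 * π * Complex.I * m) ^ k - τ * (2 * π * Complex.I * n) ^ l ≠ 0 ∧
      ‖((2 * π * Complex.I * m) ^ k - τ * (2 * π * Complex.I * n) ^ l)⁻¹‖ ≤ C := by
  have hpos : 0 < min 1 ‖τ‖ := lt_min one_pos (norm_pos_iff.mpr hτ)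
  refine ⟨(min 1 ‖τ‖)⁻¹, fun m n hmn => ?_⟩
  have hlow := min_one_norm_le_norm_two_pi_I_pow_sub h hmn
  refine ⟨norm_pos_iff.mp (hpos.trans_le hlow), ?_⟩
  rw [norm_inv]
  exact inv_anti₀ hpos hlow

/-- If `i^{l−k} τ` is purely imaginary (`τ ≠ 0`), then
`(m,n) ↦ ((2πim)^k − τ(2πin)^l)⁻¹` is well defined and bounded on `ℤ² \ {(0,0)}`. -/
theorem stmt_11 (k l : ℕ) (hk : 0 < k) (hl : 0 < l) (τ : ℂ) (hτ : τ ≠ 0)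
    (h : (Complex.I ^ ((l : ℤ) - (k : ℤ)) * τ).re = 0) :
    ∃ C : ℝ, ∀ m n : ℤ, ¬(m = 0 ∧ n = 0) →
      (2 * π * Complex.I * m) ^ k - τ * (2 * π * Complex.I * n) ^ l ≠ 0 ∧
      ‖((2 * π * Complex.I * m) ^ k - τ * (2 * π * Complex.I * n) ^ l)⁻¹‖ ≤ C :=
  stmt_11_general k l τ hτ h
end
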